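/- arXiv:2101.02541 — 2 statements merged into one kernel-verified Lean document; each statement's English description precedes it below -/
import Mathlib

section
/- Let i ≥ 3, j ≥ 1 and 0 ≤ k ≤ i−1 be integers. Then every simple graph on the vertex set (Fin j) × (ZMod i) whose edge set contains all edges of the twisted toroidal grid T(i,j,k) has a Hamiltonian cycle. -/
/-- The twisted toroidal grid `T(i,j,k)` on vertex set `Fin j × ZMod i`, with row edges
`{(b,a),(b,a+1)}`, vertical edges `{(b,a),(b+1,a)}` for `0 ≤ b < j-1`, and wrap-around
edges `{(j-1,a),(0,a+k)}`. -/
def twistedGrid (i j k : ℕ) : SimpleGraph (Fin j × ZMod i) :=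
  SimpleGraph.fromRel (fun p q =>
    (p.1 = q.1 ∧ q.2 = p.2 + 1) ∨
    ((q.1 : ℕ) = (p.1 : ℕ) + 1 ∧ q.2 = p.2) ∨
    ((p.1 : ℕ) = j - 1 ∧ (q.1 : ℕ) = 0 ∧ q.2 = p.2 + (k : ZMod i)))

/-!
The untwisted cylinder `pathGraph j □ circulantGraph {1}`, a spanning subgraph of `T(i,j,k)`, is
already Hamiltonian, whatever the parities of `i` and `j`. Snake through the nonzero
columns row by row, row `b` running from `(-1)^b` to `-(-1)^b` in steps of `(-1)^b`: as `i - 1 = -1`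
in `ZMod i`, each row ends directly above the start of the next. Both ends of the snake are
neighbours of column `0`, so the cycle closes by running back along column `0`.
-/

open Function Fin.NatCast

namespace SimpleGraph

variable {V : Type*} [DecidableEq V] {G : SimpleGraph V}

theorem cycleGraph.isHamiltonianCycle_cycle (n : ℕ) : (cycleGraph.cycle n).IsHamiltonianCycle :=
  Walk.isHamiltonianCycle_iff_isCycle_and_length_eq.2
    ⟨cycleGraph.isCycle_cycle, by simp⟩

theorem exists_isHamiltonianCycle_of_bijective_hom {n : ℕ} (f : cycleGraph (n + 3) →g G)
    (hf : Bijective f) : ∃ (v : V) (c : G.Walk v v), c.IsHamiltonianCycle :=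
  ⟨_, _, (cycleGraph.isHamiltonianCycle_cycle n).map hf⟩

theorem exists_isHamiltonianCycle_of_enumeration [Fintype V] {N : ℕ} (hN : 3 ≤ N)
    (hcard : Fintype.card V = N) (g : ℕ → V) (hg : ∀ v, ∃ n < N, g n = v)
    (hadj : ∀ n, n + 1 < N → G.Adj (g n) (g (n + 1))) (hclose : G.Adj (g (N - 1)) (g 0)) :
    ∃ (v : V) (c : G.Walk v v), c.IsHamiltonianCycle := by
  obtain ⟨n, rfl⟩ : ∃ n, N = n + 3 := ⟨N - 3, by omega⟩
  have hsucc (u : Fin (n + 3)) : G.Adj (g u) (g ↑(u + 1)) := by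
    by_cases hu : u = Fin.last _
    · simpa [hu] using hclose
    · have hu' : (u : ℕ) + 1 < n + 3 := by
        have := Fin.val_lt_last hu; omega
      rw [Fin.val_add_one_of_lt' hu']
      exact hadj u hu'
  let f : cycleGraph (n + 3) →g G :=
    { toFun u := g u
      map_rel' {u v} huv := by
        rcases cycleGraph_adj.1 huv with h | h
        · rw [sub_eq_iff_eq_add'] at h; subst h; exact (hsucc v).symm
        · rw [sub_eq_iff_eq_add'] at h; subst h; exact hsucc u }
  refine exists_isHamiltonianCycle_of_bijective_hom f ?_
  refine (Fintype.bijective_iff_surjective_and_card f).2 ⟨fun v => ?_, by simp [hcard]⟩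
  obtain ⟨m, hm, rfl⟩ := hg v
  exact ⟨⟨m, hm⟩, rfl⟩

end SimpleGraph

open SimpleGraph

def cylinderGraph (i j : ℕ) : SimpleGraph (Fin j × ZMod i) :=
  pathGraph j □ circulantGraph {1}

theorem cylinderGraph_le_twistedGrid (i j k : ℕ) : cylinderGraph i j ≤ twistedGrid i j k := by
  intro x y h
  simp only [cylinderGraph, boxProd_adj, pathGraph_adj, circulantGraph_adj] at h
  simp only [twistedGrid, fromRel_adj]
  grind

namespace cylinderGraph

variable {i j : ℕ}

theorem adj_add_neg_one_pow (hi : i ≠ 1) (b : Fin j) (a : ZMod i) (r : ℕ) :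
    (cylinderGraph i j).Adj (b, a) (b, a + (-1) ^ r) := by
  have : Nontrivial (ZMod i) := ZMod.nontrivial_iff.2 hi
  rw [cylinderGraph, boxProd_adj_right, circulantGraph_adj]
  rcases neg_one_pow_eq_or (ZMod i) r with h | h <;> simp [h]

theorem adj_natCast_succ {J b : ℕ} (hb : b < J) (a : ZMod i) :
    (cylinderGraph i (J + 1)).Adj ((b : Fin (J + 1)), a) (((b + 1 : ℕ) : Fin (J + 1)), a) := by
  rw [cylinderGraph, boxProd_adj_left, pathGraph_adj, Fin.val_natCast, Fin.val_natCast,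
    Nat.mod_eq_of_lt (by omega), Nat.mod_eq_of_lt (by omega)]
  exact Or.inl rfl

end cylinderGraph

def cylinderTour (m J n : ℕ) : Fin (J + 1) × ZMod (m + 1) :=
  if n < (J + 1) * m then ((n / m : ℕ), (-1) ^ (n / m) * ((n % m + 1 : ℕ) : ZMod (m + 1)))
  else ((J - (n - (J + 1) * m) : ℕ), 0)

namespace cylinderTour

variable {m J : ℕ}

theorem apply_row {b t : ℕ} (hb : b ≤ J) (ht : t < m) :
    cylinderTour m J (b * m + t) =
      ((b : Fin (J + 1)), (-1) ^ b * ((t + 1 : ℕ) : ZMod (m + 1))) := by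
  have hm : 0 < m := by omega
  have hlt : b * m + t < (J + 1) * m := by nlinarith
  have hdiv : (b * m + t) / m = b := by
    rw [Nat.add_comm, Nat.add_mul_div_right _ _ hm, Nat.div_eq_of_lt ht, Nat.zero_add]
  have hmod : (b * m + t) % m = t := by
    rw [Nat.add_comm, Nat.add_mul_mod_self_right, Nat.mod_eq_of_lt ht]
  simp only [cylinderTour, if_pos hlt, hdiv, hmod]

theorem apply_column (s : ℕ) :
    cylinderTour m J ((J + 1) * m + s) = (((J - s : ℕ) : Fin (J + 1)), 0) := by
  simp [cylinderTour]

theorem adj_succ (hm : 0 < m) {n : ℕ} (hn : n + 1 < (J + 1) * (m + 1)) :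
    (cylinderGraph (m + 1) (J + 1)).Adj (cylinderTour m J n) (cylinderTour m J (n + 1)) := by
  have hi : m + 1 ≠ 1 := by omega
  rcases lt_or_ge n ((J + 1) * m) with hrow | hcol
  · obtain ⟨b, t, hb, ht, rfl⟩ : ∃ b t, b ≤ J ∧ t < m ∧ n = b * m + t :=
      ⟨n / m, n % m, by
        have := (Nat.div_lt_iff_lt_mul hm).2 hrow; omega, Nat.mod_lt n hm,
        (Nat.div_add_mod' n m).symm⟩
    rcases Nat.lt_or_ge (t + 1) m with ht' | ht'
    · rw [apply_row hb ht, Nat.add_assoc, apply_row hb ht']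
      convert cylinderGraph.adj_add_neg_one_pow hi _ _ b using 3
      push_cast; ring
    obtain rfl : t = m - 1 := by omega
    have hnext : b * m + (m - 1) + 1 = (b + 1) * m + 0 := by rw [Nat.add_mul]; omega
    rw [apply_row hb ht, hnext, Nat.sub_add_cancel hm,
      eq_neg_of_add_eq_zero_left (ZMod.natCast_self' m)]
    rcases Nat.lt_or_ge b J with hb' | hb'
    · rw [apply_row (by omega) hm,
        show (-1) ^ (b + 1) * ((0 + 1 : ℕ) : ZMod (m + 1)) = (-1) ^ b * -1 by push_cast; ring]
      exact cylinderGraph.adj_natCast_succ hb' _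
    · obtain rfl : b = J := by omega
      rw [apply_column]
      convert cylinderGraph.adj_add_neg_one_pow hi _ _ b using 3
      · simp
      · ring
  · obtain ⟨s, rfl⟩ : ∃ s, n = (J + 1) * m + s := ⟨n - (J + 1) * m, by omega⟩
    have hs : s < J := by rw [Nat.mul_add] at hn; omega
    rw [Nat.add_assoc, apply_column, apply_column, show J - s = (J - (s + 1)) + 1 by omega]
    exact (cylinderGraph.adj_natCast_succ (by omega) _).symm

theorem adj_last_first (hm : 0 < m) :
    (cylinderGraph (m + 1) (J + 1)).Adj
      (cylinderTour m J ((J + 1) * (m + 1) - 1)) (cylinderTour m J 0) := by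
  have h0 : cylinderTour m J 0 = (0, 1) := by
    simpa using apply_row (J := J) (b := 0) (Nat.zero_le J) hm
  rw [show (J + 1) * (m + 1) - 1 = (J + 1) * m + J by rw [Nat.mul_succ]; omega, apply_column,
    Nat.sub_self, h0]
  simpa using cylinderGraph.adj_add_neg_one_pow (i := m + 1) (j := J + 1) (by omega) 0 0 0

theorem exists_eq (v : Fin (J + 1) × ZMod (m + 1)) :
    ∃ n < (J + 1) * (m + 1), cylinderTour m J n = v := by
  obtain ⟨b, a⟩ := v
  have hb := b.is_le
  by_cases ha : a = 0
  · refine ⟨(J + 1) * m + (J - b), by rw [Nat.mul_add]; omega, ?_⟩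
    rw [apply_column, show J - (J - b) = b by omega, Fin.cast_val_eq_self, ha]
  · have hsign (x : ZMod (m + 1)) : (-1) ^ (b : ℕ) * ((-1) ^ (b : ℕ) * x) = x := by
      rw [← mul_assoc, ← mul_pow]; simp
    set c := ((-1) ^ (b : ℕ) * a).val with hc
    have hc0 : c ≠ 0 := by
      rw [hc, ZMod.val_ne_zero]
      intro h
      exact ha (by rw [← hsign a, h, mul_zero])
    have hcm : c < m + 1 := ZMod.val_lt _
    have hbm : (b : ℕ) * m ≤ J * m := Nat.mul_le_mul_right m hb
    refine ⟨b * m + (c - 1), by rw [Nat.mul_succ, Nat.succ_mul]; omega, ?_⟩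
    rw [apply_row hb (by omega), Nat.sub_add_cancel (by omega), hc, ZMod.natCast_zmod_val,
      hsign, Fin.cast_val_eq_self]

end cylinderTour

theorem cylinderGraph_exists_isHamiltonianCycle {i j : ℕ} (hi : 3 ≤ i) (hj : 1 ≤ j) :
    ∃ (v : Fin j × ZMod i) (c : (cylinderGraph i j).Walk v v), c.IsHamiltonianCycle := by
  obtain ⟨m, rfl⟩ : ∃ m, i = m + 1 := ⟨i - 1, by omega⟩
  obtain ⟨J, rfl⟩ : ∃ J, j = J + 1 := ⟨j - 1, by omega⟩
  exact exists_isHamiltonianCycle_of_enumeration (by nlinarith) (by simp [ZMod.card])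
    (cylinderTour m J) cylinderTour.exists_eq (fun _ hn => cylinderTour.adj_succ (by omega) hn)
    (cylinderTour.adj_last_first (by omega))

theorem supergraph_of_twistedGrid_hamiltonian_general (i j k : ℕ) (hi : 3 ≤ i) (hj : 1 ≤ j)
    (G : SimpleGraph (Fin j × ZMod i)) (hG : twistedGrid i j k ≤ G) :
    ∃ (v : Fin j × ZMod i) (c : G.Walk v v), c.IsHamiltonianCycle := by
  obtain ⟨v, c, hc⟩ := cylinderGraph_exists_isHamiltonianCycle hi hj
  exact ⟨v, c.mapLe ((cylinderGraph_le_twistedGrid i j k).trans hG), hc.map bijective_id⟩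

/-- Every simple graph on `Fin j × ZMod i` containing all edges of the twisted toroidal grid
`T(i,j,k)` (with `i ≥ 3`, `j ≥ 1`, `0 ≤ k ≤ i-1`) has a Hamiltonian cycle. -/
theorem supergraph_of_twistedGrid_hamiltonian (i j k : ℕ) (hi : 3 ≤ i) (hj : 1 ≤ j)
    (hk : k ≤ i - 1) (G : SimpleGraph (Fin j × ZMod i)) (hG : twistedGrid i j k ≤ G) :
    ∃ (v : Fin j × ZMod i) (c : G.Walk v v), c.IsHamiltonianCycle :=
  supergraph_of_twistedGrid_hamiltonian_general i j k hi hj G hG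
end

section
/- Let i ≥ 6 be an even integer and let 0 ≤ k ≤ i−1. In the graph H(i,1,k) (with y-vertices y(a) for a ∈ ZMod i forming a cycle, and x-vertices x(t) for t ∈ Fin (i/2) with x(t) adjacent to y(2t) and y(2t+1)), the closed walk obtained by concatenating, for t = 0, 1, …, i/2 − 1, the segment y(2t), x(t), y(2t+1) followed by the edge from y(2t+1) to y(2t+2) (indices modulo i), is a Hamiltonian cycle. -/
/-- The edge graph `H(i,j,k)` of the doubly semi-equivelar map of type `[3².6²:3.6.3.6]`
in its `M(i,j,k)`-representation.  The `y`-vertices `Sum.inl (s, a)` (with `s : Fin j`,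
`a : ZMod i`) form `j` horizontal cycles of length `i`; the `x`-vertices `Sum.inr (s, t)`
(with `t : Fin (i/2)`) sit between consecutive horizontal cycles: `x(s,t)` is adjacent
to `y(s,2t)`, `y(s,2t+1)`, `y(s+1,2t)`, `y(s+1,2t+1)` (for `s < j-1`), and `x(j-1,t)` is
adjacent to `y(0,2t+k)` and `y(0,2t+1+k)`. -/
def Hgraph (i j k : ℕ) : SimpleGraph ((Fin j × ZMod i) ⊕ (Fin j × Fin (i / 2))) :=
  SimpleGraph.fromRel (fun p q =>
    match p, q with
    | Sum.inl (s, a), Sum.inl (s', a') => s = s' ∧ a' = a + 1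
    | Sum.inr (s, t), Sum.inl (s', a) =>
        (s = s' ∧ (a = ((2 * (t : ℕ) : ℕ) : ZMod i) ∨ a = ((2 * (t : ℕ) + 1 : ℕ) : ZMod i))) ∨
        ((s' : ℕ) = (s : ℕ) + 1 ∧
          (a = ((2 * (t : ℕ) : ℕ) : ZMod i) ∨ a = ((2 * (t : ℕ) + 1 : ℕ) : ZMod i))) ∨
        ((s : ℕ) = j - 1 ∧ (s' : ℕ) = 0 ∧
          (a = ((2 * (t : ℕ) : ℕ) : ZMod i) + (k : ZMod i) ∨
           a = ((2 * (t : ℕ) + 1 : ℕ) : ZMod i) + (k : ZMod i)))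
    | _, _ => False)

/-!
The cycle runs once around the `y`-cycle `y(0), y(1), …, y(i-1), y(0)` and, between `y(2t)` and
`y(2t+1)`, detours through their common neighbour `x(t)`, so consecutive vertices are adjacent.
It lists `3 · (i/2) = i + i/2` vertices before closing up, and every vertex of `H(i,1,k)` occurs
among them, so none is repeated.
-/

theorem List.nodup_of_forall_mem_of_length_eq_card {α : Type*} [Fintype α] {l : List α}
    (hmem : ∀ a, a ∈ l) (hlen : l.length = Fintype.card α) : l.Nodup :=
  List.nodup_iff_injective_get.mpr <|
    ((Fintype.bijective_iff_surjective_and_card l.get).mpr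
      ⟨fun a => List.mem_iff_get.mp (hmem a), by simp [hlen]⟩).1

namespace SimpleGraph

variable {V : Type*} {G : SimpleGraph V}

theorem Walk.isHamiltonianCycle_of_support_eq_append [Fintype V] [DecidableEq V] {u : V}
    {p : G.Walk u u} {l : List V} (hp : p.support = l ++ [u]) (hmem : ∀ v, v ∈ l)
    (hlen : l.length = Fintype.card V) (h3 : 3 ≤ l.length) : p.IsHamiltonianCycle := by
  have hperm : p.support.tail.Perm l := by
    simpa [hp] using p.tail_support_perm_dropLast_support
  have hlength : p.length = l.length := by
    simpa [hp] using p.length_support.symm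
  have hnil : ¬ p.Nil := by
    rw [← Walk.length_eq_zero_iff]; omega
  have hpath : p.tail.IsPath := by
    rw [Walk.isPath_def, p.support_tail_of_not_nil hnil, hperm.nodup_iff]
    exact List.nodup_of_forall_mem_of_length_eq_card hmem hlen
  refine Walk.isHamiltonianCycle_isCycle_and_isHamiltonian_tail.mpr
    ⟨Walk.isCycle_iff_isPath_tail_and_le_length.mpr ⟨hpath, by omega⟩,
      hpath.isHamiltonian_of_mem fun v => ?_⟩
  rw [p.support_tail_of_not_nil hnil, hperm.mem_iff]
  exact hmem v

theorem exists_walk_support_eq_flatMap_detours {m : ℕ} (y : ℕ → V) (x : Fin m → V)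
    (hy : ∀ n, G.Adj (y n) (y (n + 1))) (hyx : ∀ t : Fin m, G.Adj (y (2 * t)) (x t))
    (hxy : ∀ t : Fin m, G.Adj (x t) (y (2 * t + 1))) :
    ∃ p : G.Walk (y 0) (y (2 * m)),
      p.support = (List.finRange m).flatMap (fun t : Fin m => [y (2 * t), x t, y (2 * t + 1)]) ++
        [y (2 * m)] := by
  induction m with
  | zero => exact ⟨Walk.nil, by simp⟩
  | succ m ih =>
    obtain ⟨p, hp⟩ := ih (fun t => x t.castSucc) (fun t => hyx t.castSucc)
      (fun t => hxy t.castSucc)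
    let detour : G.Walk (y (2 * m)) (y (2 * (m + 1))) :=
      .cons (hyx (Fin.last m)) (.cons (hxy (Fin.last m)) (.cons (hy _) .nil))
    refine ⟨p.append detour, ?_⟩
    simp [Walk.support_append, hp, detour, List.finRange_succ_last, List.flatMap_append,
      List.flatMap_map, mul_add_one]

end SimpleGraph

namespace Hgraph

variable {i j k : ℕ}

theorem adj_inl_inl_add_one (hi : 1 < i) (s : Fin j) (a : ZMod i) :
    (Hgraph i j k).Adj (.inl (s, a)) (.inl (s, a + 1)) := by
  have : Fact (1 < i) := ⟨hi⟩
  exact ⟨by simp, Or.inl ⟨rfl, rfl⟩⟩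

theorem adj_inl_inr (s : Fin j) (t : Fin (i / 2)) :
    (Hgraph i j k).Adj (.inl (s, ((2 * (t : ℕ) : ℕ) : ZMod i))) (.inr (s, t)) :=
  ⟨by simp, Or.inr (Or.inl ⟨rfl, Or.inl rfl⟩)⟩

theorem adj_inr_inl (s : Fin j) (t : Fin (i / 2)) :
    (Hgraph i j k).Adj (.inr (s, t)) (.inl (s, ((2 * (t : ℕ) + 1 : ℕ) : ZMod i))) :=
  ⟨by simp, Or.inl (Or.inl ⟨rfl, Or.inr rfl⟩)⟩

def oneRowCycleVertices (i : ℕ) : List ((Fin 1 × ZMod i) ⊕ (Fin 1 × Fin (i / 2))) :=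
  (List.finRange (i / 2)).flatMap fun t : Fin (i / 2) =>
    [.inl (0, ((2 * (t : ℕ) : ℕ) : ZMod i)), .inr (0, t),
      .inl (0, ((2 * (t : ℕ) + 1 : ℕ) : ZMod i))]

theorem mem_oneRowCycleVertices [NeZero i] (hie : Even i)
    (v : (Fin 1 × ZMod i) ⊕ (Fin 1 × Fin (i / 2))) : v ∈ oneRowCycleVertices i := by
  simp only [oneRowCycleVertices, List.mem_flatMap, List.mem_finRange, true_and]
  rcases v with ⟨s, a⟩ | ⟨s, t⟩
  · obtain ⟨n, hn, rfl⟩ : ∃ n < i, (n : ZMod i) = a :=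
      ⟨a.val, a.val_lt, a.natCast_zmod_val⟩
    obtain ⟨r, rfl⟩ := hie
    obtain ⟨m, rfl | rfl⟩ := Nat.even_or_odd' n <;>
      exact ⟨⟨m, by omega⟩, by simp [Fin.fin_one_eq_zero s]⟩
  · exact ⟨t, by simp [Fin.fin_one_eq_zero s]⟩

theorem length_oneRowCycleVertices (i : ℕ) : (oneRowCycleVertices i).length = 3 * (i / 2) := by
  simp [oneRowCycleVertices, mul_comm]

theorem card_vertices [NeZero i] (hie : Even i) :
    Fintype.card ((Fin j × ZMod i) ⊕ (Fin j × Fin (i / 2))) = 3 * (j * (i / 2)) := by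
  have := Nat.two_mul_div_two_of_even hie
  simp only [Fintype.card_sum, Fintype.card_prod, Fintype.card_fin, ZMod.card]
  nlinarith

end Hgraph

theorem Hgraph_one_row_explicit_hamiltonian_general (i k : ℕ) (hi : 6 ≤ i) (hie : Even i) :
    ∃ c : (Hgraph i 1 k).Walk (Sum.inl (0, (0 : ZMod i))) (Sum.inl (0, (0 : ZMod i))),
      c.IsHamiltonianCycle ∧
      c.support =
        ((List.finRange (i / 2)).flatMap (fun (t : Fin (i / 2)) =>
          [Sum.inl (0, ((2 * (t : ℕ) : ℕ) : ZMod i)),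
           Sum.inr (0, t),
           Sum.inl (0, ((2 * (t : ℕ) + 1 : ℕ) : ZMod i))]) :
          List ((Fin 1 × ZMod i) ⊕ (Fin 1 × Fin (i / 2)))) ++
        [Sum.inl (0, (0 : ZMod i))] := by
  have : NeZero i := ⟨by omega⟩
  have h2 : 2 * (i / 2) = i := Nat.two_mul_div_two_of_even hie
  obtain ⟨p, hp⟩ := SimpleGraph.exists_walk_support_eq_flatMap_detours (G := Hgraph i 1 k)
    (fun n => .inl (0, (n : ZMod i))) (fun t => .inr (0, t))
    (fun n => by simpa using Hgraph.adj_inl_inl_add_one (k := k) (by omega) 0 (n : ZMod i))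
    (Hgraph.adj_inl_inr 0) (Hgraph.adj_inr_inl 0)
  let c : (Hgraph i 1 k).Walk (.inl (0, 0)) (.inl (0, 0)) :=
    p.copy (by rw [Nat.cast_zero]) (by rw [h2, ZMod.natCast_self])
  have hc : c.support = Hgraph.oneRowCycleVertices i ++ [.inl (0, 0)] := by
    rw [SimpleGraph.Walk.support_copy, hp, h2, ZMod.natCast_self]
    rfl
  have hlen := Hgraph.length_oneRowCycleVertices i
  refine ⟨c, SimpleGraph.Walk.isHamiltonianCycle_of_support_eq_append hc
    (Hgraph.mem_oneRowCycleVertices hie) ?_ (by omega), hc⟩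
  rw [hlen, Hgraph.card_vertices hie, one_mul]

/-- In `H(i,1,k)` (even `i ≥ 6`, `0 ≤ k ≤ i-1`), the closed walk whose vertex sequence is
obtained by concatenating, for `t = 0, …, i/2 - 1`, the segments `y(2t), x(t), y(2t+1)`
(each followed by the edge to `y(2t+2)`), returning to `y(0)`, is a Hamiltonian cycle
(case `j = 1` of Lemma 3.4.2 of the paper). -/
theorem Hgraph_one_row_explicit_hamiltonian (i k : ℕ) (hi : 6 ≤ i) (hie : Even i)
    (hk : k ≤ i - 1) :
    ∃ c : (Hgraph i 1 k).Walk (Sum.inl (0, (0 : ZMod i))) (Sum.inl (0, (0 : ZMod i))),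
      c.IsHamiltonianCycle ∧
      c.support =
        ((List.finRange (i / 2)).flatMap (fun (t : Fin (i / 2)) =>
          [Sum.inl (0, ((2 * (t : ℕ) : ℕ) : ZMod i)),
           Sum.inr (0, t),
           Sum.inl (0, ((2 * (t : ℕ) + 1 : ℕ) : ZMod i))]) :
          List ((Fin 1 × ZMod i) ⊕ (Fin 1 × Fin (i / 2)))) ++
        [Sum.inl (0, (0 : ZMod i))] :=
  Hgraph_one_row_explicit_hamiltonian_general i k hi hie
end
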